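/- If the sequent l₁ ⊗ r₁^{k₁} ⊗ ⋯ ⊗ rₙ^{kₙ}, !Φ_M, !𝒦 ⊢ l₀ is derivable in linear logic, then the Minsky machine M can go from (L₁, k₁, …, kₙ) to the halting configuration (L₀, 0, …, 0). -/
import Mathlib


/-- Formulas of propositional linear logic over atoms `α`,
built from atoms with ⊗, ⊸, ⊕ and !. -/
inductive Fm (α : Type) : Type
  | atom : α → Fm α
  | tens : Fm α → Fm α → Fm α
  | lolli : Fm α → Fm α → Fm α
  | oplus : Fm α → Fm α → Fm α
  | bang : Fm α → Fm α
deriving DecidableEq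

/-- Derivability in the intuitionistic linear sequent calculus:
multiset antecedent, at most one succedent formula (`none` = empty succedent). -/
inductive Deriv {α : Type} : Multiset (Fm α) → Option (Fm α) → Prop
  | id (A : Fm α) : Deriv {A} (some A)
  | cut {Γ Δ : Multiset (Fm α)} {A : Fm α} {C : Option (Fm α)} :
      Deriv Γ (some A) → Deriv (A ::ₘ Δ) C → Deriv (Γ + Δ) C
  | tensL {Γ : Multiset (Fm α)} {A B : Fm α} {C : Option (Fm α)} :
      Deriv (A ::ₘ B ::ₘ Γ) C → Deriv (Fm.tens A B ::ₘ Γ) C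
  | tensR {Γ Δ : Multiset (Fm α)} {A B : Fm α} :
      Deriv Γ (some A) → Deriv Δ (some B) → Deriv (Γ + Δ) (some (Fm.tens A B))
  | lolliL {Γ Δ : Multiset (Fm α)} {A B : Fm α} {C : Option (Fm α)} :
      Deriv Γ (some A) → Deriv (B ::ₘ Δ) C → Deriv (Fm.lolli A B ::ₘ (Γ + Δ)) C
  | lolliR {Γ : Multiset (Fm α)} {A B : Fm α} :
      Deriv (A ::ₘ Γ) (some B) → Deriv Γ (some (Fm.lolli A B))
  | oplusL {Γ : Multiset (Fm α)} {A B : Fm α} {C : Option (Fm α)} :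
      Deriv (A ::ₘ Γ) C → Deriv (B ::ₘ Γ) C → Deriv (Fm.oplus A B ::ₘ Γ) C
  | oplusR₁ {Γ : Multiset (Fm α)} {A B : Fm α} :
      Deriv Γ (some A) → Deriv Γ (some (Fm.oplus A B))
  | oplusR₂ {Γ : Multiset (Fm α)} {A B : Fm α} :
      Deriv Γ (some B) → Deriv Γ (some (Fm.oplus A B))
  | bangL {Γ : Multiset (Fm α)} {A : Fm α} {C : Option (Fm α)} :
      Deriv (A ::ₘ Γ) C → Deriv (Fm.bang A ::ₘ Γ) C
  | bangW {Γ : Multiset (Fm α)} {A : Fm α} {C : Option (Fm α)} :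
      Deriv Γ C → Deriv (Fm.bang A ::ₘ Γ) C
  | bangC {Γ : Multiset (Fm α)} {A : Fm α} {C : Option (Fm α)} :
      Deriv (Fm.bang A ::ₘ Fm.bang A ::ₘ Γ) C → Deriv (Fm.bang A ::ₘ Γ) C
  | bangR {Γ : Multiset (Fm α)} {A : Fm α} :
      (∀ B ∈ Γ, ∃ B', B = Fm.bang B') →
      Deriv Γ (some A) → Deriv Γ (some (Fm.bang A))

/-- Simple products: tensor products of (a positive number of) positive literals. -/
inductive Simple {α : Type} : Fm α → Prop
  | atom (a : α) : Simple (Fm.atom a)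
  | tens {X Y : Fm α} : Simple X → Simple Y → Simple (Fm.tens X Y)

/-- Horn implications `X ⊸ Y` with `X`, `Y` simple products. -/
def IsHorn {α : Type} (A : Fm α) : Prop :=
  ∃ X Y : Fm α, Simple X ∧ Simple Y ∧ A = Fm.lolli X Y

/-- ⊕-Horn implications `X ⊸ (Y₁ ⊕ Y₂)` with `X`, `Y₁`, `Y₂` simple products. -/
def IsOHorn {α : Type} (A : Fm α) : Prop :=
  ∃ X Y₁ Y₂ : Fm α, Simple X ∧ Simple Y₁ ∧ Simple Y₂ ∧
    A = Fm.lolli X (Fm.oplus Y₁ Y₂)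
/-- Literals of the Minsky encoding: `lab i` for the label `Lᵢ`, `reg m` for
the `m`-th counter, and `kap m` for the killer literal `κₘ`. -/
inductive Lit (n : ℕ) : Type
  | lab : ℕ → Lit n
  | reg : Fin n → Lit n
  | kap : Fin n → Lit n
deriving DecidableEq

/-- Instructions of an `n`-counter Minsky machine:
`inc i m j` is `Lᵢ: xₘ := xₘ + 1; goto Lⱼ`,
`dec i m j` is `Lᵢ: xₘ := xₘ - 1; goto Lⱼ`,
`pos i m j` is `Lᵢ: if xₘ > 0 then goto Lⱼ`,
`zero i m j` is `Lᵢ: if xₘ = 0 then goto Lⱼ`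
(the halt instruction is `L₀: halt`, i.e. label `0` carries no instruction). -/
inductive Instr (n : ℕ) : Type
  | inc : ℕ → Fin n → ℕ → Instr n
  | dec : ℕ → Fin n → ℕ → Instr n
  | pos : ℕ → Fin n → ℕ → Instr n
  | zero : ℕ → Fin n → ℕ → Instr n
deriving DecidableEq

/-- The source label of an instruction. -/
def Instr.src {n : ℕ} : Instr n → ℕ
  | Instr.inc i _ _ => i
  | Instr.dec i _ _ => i
  | Instr.pos i _ _ => i
  | Instr.zero i _ _ => i

/-- A configuration: the current label together with the counter contents. -/
abbrev Config (n : ℕ) := ℕ × (Fin n → ℕ)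

/-- One move of the Minsky machine with program `M`. -/
inductive MStep {n : ℕ} (M : List (Instr n)) : Config n → Config n → Prop
  | inc {i : ℕ} {m : Fin n} {j : ℕ} {c : Fin n → ℕ} :
      Instr.inc i m j ∈ M → MStep M (i, c) (j, Function.update c m (c m + 1))
  | dec {i : ℕ} {m : Fin n} {j : ℕ} {c : Fin n → ℕ} :
      Instr.dec i m j ∈ M → 0 < c m →
      MStep M (i, c) (j, Function.update c m (c m - 1))
  | pos {i : ℕ} {m : Fin n} {j : ℕ} {c : Fin n → ℕ} :
      Instr.pos i m j ∈ M → 0 < c m → MStep M (i, c) (j, c)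
  | zero {i : ℕ} {m : Fin n} {j : ℕ} {c : Fin n → ℕ} :
      Instr.zero i m j ∈ M → c m = 0 → MStep M (i, c) (j, c)

/-- `M` can go from one configuration to another (by a finite computation). -/
def Reaches {n : ℕ} (M : List (Instr n)) : Config n → Config n → Prop :=
  Relation.ReflTransGen (MStep M)

/-- The encoding of a configuration `(L, c₁, …, cₙ)` as the multiset of
literals `{l} ∪ {r₁ repeated c₁ times} ∪ … ∪ {rₙ repeated cₙ times}`. -/
def encC {n : ℕ} (K : Config n) : Multiset (Lit n) :=
  Lit.lab K.1 ::ₘ (Finset.univ.sum fun m : Fin n =>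
    Multiset.replicate (K.2 m) (Lit.reg m))

/-- The linear logic formula `φ_I` axiomatizing an instruction `I`:
`φ₍₁₎ = lᵢ ⊸ (lⱼ ⊗ rₘ)`, `φ₍₂₎ = (lᵢ ⊗ rₘ) ⊸ lⱼ`,
`φ₍₃₎ = (lᵢ ⊗ rₘ) ⊸ (lⱼ ⊗ rₘ)`, `φ₍₄₎ = lᵢ ⊸ (lⱼ ⊕ κₘ)`. -/
def phiF {n : ℕ} : Instr n → Fm (Lit n)
  | Instr.inc i m j =>
      Fm.lolli (Fm.atom (Lit.lab i))
        (Fm.tens (Fm.atom (Lit.lab j)) (Fm.atom (Lit.reg m)))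
  | Instr.dec i m j =>
      Fm.lolli (Fm.tens (Fm.atom (Lit.lab i)) (Fm.atom (Lit.reg m)))
        (Fm.atom (Lit.lab j))
  | Instr.pos i m j =>
      Fm.lolli (Fm.tens (Fm.atom (Lit.lab i)) (Fm.atom (Lit.reg m)))
        (Fm.tens (Fm.atom (Lit.lab j)) (Fm.atom (Lit.reg m)))
  | Instr.zero i m j =>
      Fm.lolli (Fm.atom (Lit.lab i))
        (Fm.oplus (Fm.atom (Lit.lab j)) (Fm.atom (Lit.kap m)))

/-- The multiset `Φ_M` axiomatizing the program of `M`. -/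
def PhiF {n : ℕ} (M : List (Instr n)) : Multiset (Fm (Lit n)) :=
  (M.map phiF : List (Fm (Lit n)))

/-- The multiset `𝒦 = ⋃ₘ 𝒦ₘ`, where `𝒦ₘ` consists of `κₘ ⊸ l₀` and the
killing implications `(κₘ ⊗ rᵢ) ⊸ κₘ` for `i ≠ m`. -/
def KF (n : ℕ) : Multiset (Fm (Lit n)) :=
  Finset.univ.sum fun m : Fin n =>
    Fm.lolli (Fm.atom (Lit.kap m)) (Fm.atom (Lit.lab 0)) ::ₘ
      ((Finset.univ.erase m).val.map fun i : Fin n =>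
        Fm.lolli (Fm.tens (Fm.atom (Lit.kap m)) (Fm.atom (Lit.reg i)))
          (Fm.atom (Lit.kap m)))

/-- The encoding of a configuration `(L, c₁, …, cₙ)` as the simple product
`l ⊗ r₁^{c₁} ⊗ ⋯ ⊗ rₙ^{cₙ}`. -/
def encCF {n : ℕ} (K : Config n) : Fm (Lit n) :=
  ((List.finRange n).flatMap fun m : Fin n =>
      List.replicate (K.2 m) (Fm.atom (Lit.reg m) : Fm (Lit n))).foldl
    Fm.tens (Fm.atom (Lit.lab K.1))

namespace Stmt13

section Sem

variable {α P : Type} [AddCommMonoid P]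

/-- Double-negation closure w.r.t. a pole. -/
def cl (pole : P → Prop) (X : Set P) : Set P :=
  {s | ∀ u, (∀ x ∈ X, pole (x + u)) → pole (s + u)}

variable {pole : P → Prop}

lemma subset_cl {X : Set P} : X ⊆ cl pole X := fun x hx u hu => hu x hx

lemma cl_mono {X Y : Set P} (h : X ⊆ Y) : cl pole X ⊆ cl pole Y :=
  fun s hs u hu => hs u (fun x hx => hu x (h hx))

lemma cl_idem {X : Set P} : cl pole (cl pole X) ⊆ cl pole X :=
  fun s hs u hu => hs u (fun x hx => hx u hu)

lemma cl_min {X Y : Set P} (h : X ⊆ cl pole Y) : cl pole X ⊆ cl pole Y :=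
  fun s hs => cl_idem (cl_mono h hs)

/-- Workhorse: multiply an element of a closure by `t`. -/
lemma cl_mul {X Z : Set P} {s t : P} (hs : s ∈ cl pole X)
    (hZ : cl pole Z ⊆ Z) (h : ∀ x ∈ X, x + t ∈ Z) : s + t ∈ Z := by
  apply hZ
  intro u hu
  have := hs (t + u) (fun x hx => by
    have := hu _ (h x hx); rwa [add_assoc] at this)
  rwa [← add_assoc] at this

lemma cl_add_cl {X Y : Set P} {x y : P} (hx : x ∈ cl pole X) (hy : y ∈ cl pole Y) :
    x + y ∈ cl pole {s | ∃ a ∈ X, ∃ b ∈ Y, s = a + b} := by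
  intro u hu
  have H : ∀ a ∈ X, pole (a + (y + u)) := by
    intro a ha
    have h2 := hy (a + u) (fun b hb => by
      have h3 := hu _ ⟨a, ha, b, hb, rfl⟩
      have e : a + b + u = b + (a + u) := by
        rw [add_comm a b, add_assoc]
      rwa [e] at h3)
    have e : y + (a + u) = a + (y + u) := by
      rw [← add_assoc, ← add_assoc, add_comm y a]
    rwa [e] at h2
  have := hx (y + u) H
  rwa [← add_assoc] at this

/-- Phase-style interpretation of formulas. -/
def sem (pole : P → Prop) (V : α → Set P) : Fm α → Set P
  | .atom a => cl pole (V a)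
  | .tens A B => cl pole {s | ∃ x ∈ sem pole V A, ∃ y ∈ sem pole V B, s = x + y}
  | .lolli A B => {s | ∀ x ∈ sem pole V A, s + x ∈ sem pole V B}
  | .oplus A B => cl pole (sem pole V A ∪ sem pole V B)
  | .bang A => cl pole {s | s = 0 ∧ 0 ∈ sem pole V A}

variable {V : α → Set P}

lemma sem_fact : ∀ A : Fm α, cl pole (sem pole V A) ⊆ sem pole V A
  | .atom a => cl_min (le_refl _)
  | .tens A B => cl_min (le_refl _)
  | .oplus A B => cl_min (le_refl _)
  | .bang A => cl_min (le_refl _)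
  | .lolli A B => by
      intro s hs x hx
      apply sem_fact B
      intro u hu
      have := hs (x + u) (fun z hz => by
        have h2 := hu (z + x) (hz x hx)
        have e : z + x + u = z + (x + u) := add_assoc _ _ _
        rwa [e] at h2)
      rwa [← add_assoc] at this

def semO (pole : P → Prop) (V : α → Set P) : Option (Fm α) → Set P
  | some A => sem pole V A
  | none => cl pole ∅

lemma semO_fact : ∀ C : Option (Fm α), cl pole (semO pole V C) ⊆ semO pole V C
  | some A => sem_fact A
  | none => cl_idem

def semCtx (pole : P → Prop) (V : α → Set P) (Γ : Multiset (Fm α)) : Set P :=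
  @Multiset.foldr _ _ (fun A X => {s | ∃ x ∈ sem pole V A, ∃ y ∈ X, s = x + y})
    ⟨by
      intro A B X
      ext s
      constructor
      · rintro ⟨x, hx, y, ⟨x', hx', y', hy', rfl⟩, rfl⟩
        exact ⟨x', hx', x + y', ⟨x, hx, y', hy', rfl⟩, by
          rw [← add_assoc, ← add_assoc, add_comm x x']⟩
      · rintro ⟨x, hx, y, ⟨x', hx', y', hy', rfl⟩, rfl⟩
        exact ⟨x', hx', x + y', ⟨x, hx, y', hy', rfl⟩, by
          rw [← add_assoc, ← add_assoc, add_comm x x']⟩⟩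
    {0} Γ

lemma semCtx_zero : semCtx pole V (0 : Multiset (Fm α)) = {0} := rfl

lemma semCtx_cons {A : Fm α} {Γ : Multiset (Fm α)} :
    semCtx pole V (A ::ₘ Γ) =
      {s | ∃ x ∈ sem pole V A, ∃ y ∈ semCtx pole V Γ, s = x + y} := by
  simp only [semCtx, Multiset.foldr_cons]

lemma semCtx_add {Γ Δ : Multiset (Fm α)} :
    semCtx pole V (Γ + Δ) =
      {s | ∃ x ∈ semCtx pole V Γ, ∃ y ∈ semCtx pole V Δ, s = x + y} := by
  induction Γ using Multiset.induction with
  | empty =>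
      ext s
      simp [semCtx_zero]
  | cons A Γ ih =>
      rw [Multiset.cons_add, semCtx_cons, semCtx_cons, ih]
      ext s
      constructor
      · rintro ⟨x, hx, y, ⟨a, ha, b, hb, rfl⟩, rfl⟩
        exact ⟨x + a, ⟨x, hx, a, ha, rfl⟩, b, hb, by rw [add_assoc]⟩
      · rintro ⟨y, ⟨x, hx, a, ha, rfl⟩, b, hb, rfl⟩
        exact ⟨x, hx, a + b, ⟨a, ha, b, hb, rfl⟩, by rw [add_assoc]⟩

/-- Soundness of the linear sequent calculus w.r.t. the phase interpretation. -/
theorem soundness {Γ : Multiset (Fm α)} {C : Option (Fm α)} (d : Deriv Γ C) :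
    ∀ s ∈ semCtx pole V Γ, s ∈ semO pole V C := by
  induction d with
  | id A =>
      intro s hs
      rw [show ({A} : Multiset (Fm α)) = A ::ₘ 0 from rfl, semCtx_cons] at hs
      obtain ⟨x, hx, y, hy, rfl⟩ := hs
      rw [semCtx_zero] at hy
      cases hy
      rwa [add_zero]
  | cut d1 d2 ih1 ih2 =>
      intro s hs
      rw [semCtx_add] at hs
      obtain ⟨x, hx, y, hy, rfl⟩ := hs
      exact ih2 _ (by rw [semCtx_cons]; exact ⟨x, ih1 x hx, y, hy, rfl⟩)
  | tensL d ih =>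
      intro s hs
      rw [semCtx_cons] at hs
      obtain ⟨x, hx, t, ht, rfl⟩ := hs
      refine cl_mul hx (semO_fact _) ?_
      rintro z ⟨a, ha, b, hb, rfl⟩
      apply ih
      rw [semCtx_cons]
      exact ⟨a, ha, b + t, (by rw [semCtx_cons]; exact ⟨b, hb, t, ht, rfl⟩),
        by rw [add_assoc]⟩
  | tensR d1 d2 ih1 ih2 =>
      intro s hs
      rw [semCtx_add] at hs
      obtain ⟨x, hx, y, hy, rfl⟩ := hs
      exact subset_cl ⟨x, ih1 x hx, y, ih2 y hy, rfl⟩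
  | lolliL d1 d2 ih1 ih2 =>
      intro s hs
      rw [semCtx_cons, semCtx_add] at hs
      obtain ⟨x, hx, _, ⟨y, hy, z, hz, rfl⟩, rfl⟩ := hs
      have hxy := hx y (ih1 y hy)
      have := ih2 _ (by rw [semCtx_cons]; exact ⟨x + y, hxy, z, hz, rfl⟩)
      rwa [add_assoc] at this
  | lolliR d ih =>
      intro s hs x hx
      have := ih _ (by rw [semCtx_cons]; exact ⟨x, hx, s, hs, rfl⟩)
      rwa [add_comm x s] at this
  | oplusL d1 d2 ih1 ih2 =>
      intro s hs
      rw [semCtx_cons] at hs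
      obtain ⟨x, hx, t, ht, rfl⟩ := hs
      refine cl_mul hx (semO_fact _) ?_
      rintro z (hz | hz)
      · exact ih1 _ (by rw [semCtx_cons]; exact ⟨z, hz, t, ht, rfl⟩)
      · exact ih2 _ (by rw [semCtx_cons]; exact ⟨z, hz, t, ht, rfl⟩)
  | oplusR₁ d ih =>
      intro s hs
      exact subset_cl (Or.inl (ih s hs))
  | oplusR₂ d ih =>
      intro s hs
      exact subset_cl (Or.inr (ih s hs))
  | bangL d ih =>
      intro s hs
      rw [semCtx_cons] at hs
      obtain ⟨x, hx, t, ht, rfl⟩ := hs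
      refine cl_mul hx (semO_fact _) ?_
      rintro z ⟨rfl, hz⟩
      exact ih _ (by rw [semCtx_cons]; exact ⟨0, hz, t, ht, rfl⟩)
  | bangW d ih =>
      intro s hs
      rw [semCtx_cons] at hs
      obtain ⟨x, hx, t, ht, rfl⟩ := hs
      refine cl_mul hx (semO_fact _) ?_
      rintro z ⟨rfl, hz⟩
      rw [zero_add]
      exact ih _ ht
  | bangC d ih =>
      intro s hs
      rw [semCtx_cons] at hs
      obtain ⟨x, hx, t, ht, rfl⟩ := hs
      refine cl_mul hx (semO_fact _) ?_
      rintro z ⟨rfl, hz⟩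
      have h0 : (0 : P) ∈ sem pole V (Fm.bang _) := subset_cl ⟨rfl, hz⟩
      have := ih _ (by
        rw [semCtx_cons]
        exact ⟨0, h0, 0 + t, (by rw [semCtx_cons]; exact ⟨0, h0, t, ht, rfl⟩), rfl⟩)
      rwa [zero_add] at this
  | bangR hΓ d ih =>
      intro s hs
      have key : ∀ Γ'' : Multiset (Fm α), (∀ B ∈ Γ'', ∃ B', B = Fm.bang B') →
          ∀ s ∈ semCtx pole V Γ'',
            s ∈ cl pole {t | t = 0 ∧ (0 : P) ∈ semCtx pole V Γ''} := by
        intro Γ''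
        induction Γ'' using Multiset.induction with
        | empty =>
            intro _ s hs
            rw [semCtx_zero] at hs
            cases hs
            exact subset_cl ⟨rfl, rfl⟩
        | cons B Δ ihΔ =>
            intro hB s hs
            rw [semCtx_cons] at hs
            obtain ⟨x, hx, t, ht, rfl⟩ := hs
            obtain ⟨B', rfl⟩ := hB B (Multiset.mem_cons_self _ _)
            have ht' := ihΔ (fun B hB' => hB B (Multiset.mem_cons_of_mem hB')) t ht
            intro u hu
            have hxu : ∀ z ∈ {t : P | t = 0 ∧ (0:P) ∈ sem pole V B'}, pole (z + (t + u)) := by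
              rintro z ⟨rfl, hz⟩
              rw [zero_add]
              apply ht' u
              rintro w ⟨rfl, hw⟩
              apply hu
              refine ⟨rfl, ?_⟩
              rw [semCtx_cons]
              exact ⟨0, subset_cl ⟨rfl, hz⟩, 0, hw, (add_zero 0).symm⟩
            have := hx (t + u) hxu
            rwa [← add_assoc] at this
      have := key _ hΓ s hs
      refine cl_min ?_ this
      rintro z ⟨rfl, hz⟩
      exact subset_cl ⟨rfl, ih 0 hz⟩


lemma foldl_sem (L : List (Fm α)) : ∀ (A : Fm α) (s t : P),
    s ∈ sem pole V A → t ∈ semCtx pole V (↑L) →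
    s + t ∈ sem pole V (L.foldl Fm.tens A) := by
  induction L with
  | nil =>
      intro A s t hs ht
      rw [show ((↑([] : List (Fm α))) : Multiset (Fm α)) = 0 from rfl, semCtx_zero] at ht
      cases ht
      rwa [add_zero]
  | cons B L ih =>
      intro A s t hs ht
      rw [show ((↑(B :: L) : Multiset (Fm α))) = B ::ₘ ↑L from rfl, semCtx_cons] at ht
      obtain ⟨x, hx, t', ht', rfl⟩ := ht
      rw [List.foldl_cons, ← add_assoc]
      exact ih _ _ _ (subset_cl ⟨s, hs, x, hx, rfl⟩) ht'

lemma zero_mem_semCtx {Δ : Multiset (Fm α)}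
    (h : ∀ B ∈ Δ, (0 : P) ∈ sem pole V B) : (0 : P) ∈ semCtx pole V Δ := by
  induction Δ using Multiset.induction with
  | empty => rw [semCtx_zero]; rfl
  | cons B Δ ih =>
      rw [semCtx_cons]
      exact ⟨0, h B (Multiset.mem_cons_self _ _), 0,
        ih (fun B hB => h B (Multiset.mem_cons_of_mem hB)), (add_zero 0).symm⟩

lemma zero_mem_lolli {X Y : Fm α} (h : sem pole V X ⊆ sem pole V Y) :
    (0 : P) ∈ sem pole V (Fm.lolli X Y) := fun x hx => by
  rw [zero_add]; exact h hx

end Sem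

section Machine

variable {n : ℕ}

/-- The multiset of register literals encoding counter contents `c`. -/
def regs (c : Fin n → ℕ) : Multiset (Lit n) :=
  Finset.univ.sum fun m => Multiset.replicate (c m) (Lit.reg m)

lemma encC_eq (i : ℕ) (c : Fin n → ℕ) : encC (i, c) = Lit.lab i ::ₘ regs c := rfl

lemma mem_regs {c : Fin n → ℕ} {a : Lit n} (h : a ∈ regs c) : ∃ m, a = Lit.reg m := by
  rw [regs, Multiset.mem_sum] at h
  obtain ⟨i, -, hi⟩ := h
  exact ⟨i, Multiset.eq_of_mem_replicate hi⟩

lemma count_regs (c : Fin n → ℕ) (m : Fin n) : (regs c).count (Lit.reg m) = c m := by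
  rw [regs, Multiset.count_sum']
  rw [Finset.sum_eq_single m]
  · simp [Multiset.count_replicate]
  · intro b _ hb
    simp [Multiset.count_replicate, hb]
  · simp

lemma regs_update_succ (c : Fin n → ℕ) (m : Fin n) :
    regs (Function.update c m (c m + 1)) = Lit.reg m ::ₘ regs c := by
  apply Multiset.ext.mpr
  intro a
  rw [Multiset.count_cons]
  rcases a with i | m' | m'
  · have h1 : Lit.lab i ∉ regs (Function.update c m (c m + 1)) := by
      intro h; obtain ⟨_, h⟩ := mem_regs h; cases h
    have h2 : Lit.lab i ∉ regs c := by
      intro h; obtain ⟨_, h⟩ := mem_regs h; cases h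
    simp [Multiset.count_eq_zero.mpr h1, Multiset.count_eq_zero.mpr h2]
  · by_cases hm : m' = m
    · subst hm
      rw [count_regs, count_regs]
      simp [Function.update]
    · rw [count_regs, count_regs]
      simp [Function.update, hm]
  · have h1 : Lit.kap m' ∉ regs (Function.update c m (c m + 1)) := by
      intro h; obtain ⟨_, h⟩ := mem_regs h; cases h
    have h2 : Lit.kap m' ∉ regs c := by
      intro h; obtain ⟨_, h⟩ := mem_regs h; cases h
    simp [Multiset.count_eq_zero.mpr h1, Multiset.count_eq_zero.mpr h2]

lemma regs_zero : regs (fun _ : Fin n => 0) = 0 := by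
  simp [regs]

/-- Accepting multisets: generalized configurations from which the "halting"
multiset `{l₀}` can be reached by the multiset rewriting induced by `M` and `𝒦`. -/
inductive AccM (M : List (Instr n)) : Multiset (Lit n) → Prop
  | halt : AccM M {Lit.lab 0}
  | kapHalt (m : Fin n) : AccM M {Lit.kap m}
  | inc {i : ℕ} {m : Fin n} {j : ℕ} {R : Multiset (Lit n)} :
      Instr.inc i m j ∈ M → AccM M (Lit.lab j ::ₘ Lit.reg m ::ₘ R) →
      AccM M (Lit.lab i ::ₘ R)
  | dec {i : ℕ} {m : Fin n} {j : ℕ} {R : Multiset (Lit n)} :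
      Instr.dec i m j ∈ M → AccM M (Lit.lab j ::ₘ R) →
      AccM M (Lit.lab i ::ₘ Lit.reg m ::ₘ R)
  | pos {i : ℕ} {m : Fin n} {j : ℕ} {R : Multiset (Lit n)} :
      Instr.pos i m j ∈ M → AccM M (Lit.lab j ::ₘ Lit.reg m ::ₘ R) →
      AccM M (Lit.lab i ::ₘ Lit.reg m ::ₘ R)
  | zero {i : ℕ} {m : Fin n} {j : ℕ} {R : Multiset (Lit n)} :
      Instr.zero i m j ∈ M → Lit.reg m ∉ R → AccM M (Lit.lab j ::ₘ R) →
      AccM M (Lit.lab i ::ₘ R)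
  | kapStep {m i : Fin n} {R : Multiset (Lit n)} :
      i ≠ m → AccM M (Lit.kap m ::ₘ R) →
      AccM M (Lit.kap m ::ₘ Lit.reg i ::ₘ R)

/-- Characterization of accepting multisets. -/
theorem accM_char {M : List (Instr n)} {S : Multiset (Lit n)} (h : AccM M S) :
    (∃ i c, S = Lit.lab i ::ₘ regs c ∧ Reaches M (i, c) (0, fun _ => 0)) ∨
    (∃ m R, S = Lit.kap m ::ₘ R ∧ (∀ a ∈ R, ∃ i, a = Lit.reg i) ∧ Lit.reg m ∉ R) := by
  induction h with
  | halt =>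
      refine Or.inl ⟨0, fun _ => 0, ?_, Relation.ReflTransGen.refl⟩
      rw [regs_zero]; rfl
  | kapHalt m =>
      exact Or.inr ⟨m, 0, rfl, by simp, by simp⟩
  | inc hmem hacc ih =>
      rename_i i m j R
      rcases ih with ⟨i', c, hEq, hR⟩ | ⟨m', R', hEq, hR', hnm⟩
      · have hj : (Lit.lab j : Lit n) ∈ Lit.lab i' ::ₘ regs c := by
          rw [← hEq]; exact Multiset.mem_cons_self _ _
        rcases Multiset.mem_cons.mp hj with hj | hj
        · injection hj with hj
          subst hj
          have hEq' : Lit.reg m ::ₘ R = regs c := (Multiset.cons_inj_right _).mp hEq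
        -- c m ≥ 1
          have hcm : 0 < c m := by
            have := count_regs c m
            rw [← hEq', Multiset.count_cons_self] at this
            omega
          set c' := Function.update c m (c m - 1) with hc'
          have hc : c = Function.update c' m (c' m + 1) := by
            funext x
            by_cases hx : x = m
            · subst hx; simp [hc', Function.update]; omega
            · simp [hc', Function.update, hx]
          have hregs : regs c = Lit.reg m ::ₘ regs c' := by
            rw [hc]; exact regs_update_succ c' m
          rw [hregs] at hEq'
          have hRc : R = regs c' := (Multiset.cons_inj_right _).mp hEq'
          refine Or.inl ⟨i, c', by rw [hRc], ?_⟩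
          refine Relation.ReflTransGen.head ?_ hR
          have hstep := MStep.inc (c := c') hmem
          rwa [← hc] at hstep
        · obtain ⟨_, h⟩ := mem_regs hj; cases h
      · exfalso
        have hj : (Lit.lab j : Lit n) ∈ Lit.kap m' ::ₘ R' := by
          rw [← hEq]; exact Multiset.mem_cons_self _ _
        rcases Multiset.mem_cons.mp hj with hj | hj
        · cases hj
        · obtain ⟨_, h⟩ := hR' _ hj; cases h
  | dec hmem hacc ih =>
      rename_i i m j R
      rcases ih with ⟨i', c, hEq, hR⟩ | ⟨m', R', hEq, hR', hnm⟩
      · have hj : (Lit.lab j : Lit n) ∈ Lit.lab i' ::ₘ regs c := by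
          rw [← hEq]; exact Multiset.mem_cons_self _ _
        rcases Multiset.mem_cons.mp hj with hj | hj
        · injection hj with hj
          subst hj
          have hEq' : R = regs c := (Multiset.cons_inj_right _).mp hEq
          subst hEq'
          refine Or.inl ⟨i, Function.update c m (c m + 1), ?_, ?_⟩
          · rw [regs_update_succ]
          · refine Relation.ReflTransGen.head ?_ hR
            have hstep := MStep.dec (c := Function.update c m (c m + 1)) hmem
              (by simp)
            have : Function.update (Function.update c m (c m + 1)) m
                (Function.update c m (c m + 1) m - 1) = c := by
              funext x
              by_cases hx : x = m
              · subst hx; simp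
              · simp [Function.update, hx]
            rwa [this] at hstep
        · obtain ⟨_, h⟩ := mem_regs hj; cases h
      · exfalso
        have hj : (Lit.lab j : Lit n) ∈ Lit.kap m' ::ₘ R' := by
          rw [← hEq]; exact Multiset.mem_cons_self _ _
        rcases Multiset.mem_cons.mp hj with hj | hj
        · cases hj
        · obtain ⟨_, h⟩ := hR' _ hj; cases h
  | pos hmem hacc ih =>
      rename_i i m j R
      rcases ih with ⟨i', c, hEq, hR⟩ | ⟨m', R', hEq, hR', hnm⟩
      · have hj : (Lit.lab j : Lit n) ∈ Lit.lab i' ::ₘ regs c := by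
          rw [← hEq]; exact Multiset.mem_cons_self _ _
        rcases Multiset.mem_cons.mp hj with hj | hj
        · injection hj with hj
          subst hj
          have hEq' : Lit.reg m ::ₘ R = regs c := (Multiset.cons_inj_right _).mp hEq
          have hcm : 0 < c m := by
            have := count_regs c m
            rw [← hEq', Multiset.count_cons_self] at this
            omega
          refine Or.inl ⟨i, c, by rw [← hEq'], ?_⟩
          exact Relation.ReflTransGen.head (MStep.pos hmem hcm) hR
        · obtain ⟨_, h⟩ := mem_regs hj; cases h
      · exfalso
        have hj : (Lit.lab j : Lit n) ∈ Lit.kap m' ::ₘ R' := by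
          rw [← hEq]; exact Multiset.mem_cons_self _ _
        rcases Multiset.mem_cons.mp hj with hj | hj
        · cases hj
        · obtain ⟨_, h⟩ := hR' _ hj; cases h
  | zero hmem hnot hacc ih =>
      rename_i i m j R
      rcases ih with ⟨i', c, hEq, hR⟩ | ⟨m', R', hEq, hR', hnm⟩
      · have hj : (Lit.lab j : Lit n) ∈ Lit.lab i' ::ₘ regs c := by
          rw [← hEq]; exact Multiset.mem_cons_self _ _
        rcases Multiset.mem_cons.mp hj with hj | hj
        · injection hj with hj
          subst hj
          have hEq' : R = regs c := (Multiset.cons_inj_right _).mp hEq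
          subst hEq'
          have hcm : c m = 0 := by
            have := count_regs c m
            rw [Multiset.count_eq_zero.mpr hnot] at this
            omega
          exact Or.inl ⟨i, c, rfl, Relation.ReflTransGen.head (MStep.zero hmem hcm) hR⟩
        · obtain ⟨_, h⟩ := mem_regs hj; cases h
      · exfalso
        have hj : (Lit.lab j : Lit n) ∈ Lit.kap m' ::ₘ R' := by
          rw [← hEq]; exact Multiset.mem_cons_self _ _
        rcases Multiset.mem_cons.mp hj with hj | hj
        · cases hj
        · obtain ⟨_, h⟩ := hR' _ hj; cases h
  | kapStep hne hacc ih =>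
      rename_i m i R
      rcases ih with ⟨i', c, hEq, hR⟩ | ⟨m', R', hEq, hR', hnm⟩
      · exfalso
        have hk : (Lit.kap m : Lit n) ∈ Lit.lab i' ::ₘ regs c := by
          rw [← hEq]; exact Multiset.mem_cons_self _ _
        rcases Multiset.mem_cons.mp hk with hk | hk
        · cases hk
        · obtain ⟨_, h⟩ := mem_regs hk; cases h
      · have hk : (Lit.kap m : Lit n) ∈ Lit.kap m' ::ₘ R' := by
          rw [← hEq]; exact Multiset.mem_cons_self _ _
        rcases Multiset.mem_cons.mp hk with hk | hk
        · injection hk with hk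
          subst hk
          have hEq' : R = R' := (Multiset.cons_inj_right _).mp hEq
          subst hEq'
          refine Or.inr ⟨m, Lit.reg i ::ₘ R, rfl, ?_, ?_⟩
          · intro a ha
            rcases Multiset.mem_cons.mp ha with ha | ha
            · exact ⟨i, ha⟩
            · exact hR' _ ha
          · intro hmem'
            rcases Multiset.mem_cons.mp hmem' with h | h
            · injection h with h; exact hne h.symm
            · exact hnm h
        · obtain ⟨_, h⟩ := hR' _ hk; cases h

lemma reaches_zero {M : List (Instr n)} (hSrc : ∀ I ∈ M, 1 ≤ I.src)
    {c : Fin n → ℕ} (h : Reaches M (0, c) (0, fun _ => 0)) : c = fun _ => 0 := by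
  rcases h.cases_head with h | ⟨b, hstep, -⟩
  · exact congrArg Prod.snd h
  · exfalso
    cases hstep with
    | inc hmem => exact absurd (hSrc _ hmem) (by simp [Instr.src])
    | dec hmem _ => exact absurd (hSrc _ hmem) (by simp [Instr.src])
    | pos hmem _ => exact absurd (hSrc _ hmem) (by simp [Instr.src])
    | zero hmem _ => exact absurd (hSrc _ hmem) (by simp [Instr.src])

lemma accM_lab0 {M : List (Instr n)} (hSrc : ∀ I ∈ M, 1 ≤ I.src)
    {u : Multiset (Lit n)} (h : AccM M (Lit.lab 0 ::ₘ u)) : u = 0 := by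
  rcases accM_char h with ⟨i, c, hEq, hR⟩ | ⟨m', R', hEq, hR', -⟩
  · have h0 : (Lit.lab 0 : Lit n) ∈ Lit.lab i ::ₘ regs c := by
      rw [← hEq]; exact Multiset.mem_cons_self _ _
    rcases Multiset.mem_cons.mp h0 with h0 | h0
    · injection h0 with h0
      subst h0
      have hu : u = regs c := (Multiset.cons_inj_right _).mp hEq
      rw [hu, reaches_zero hSrc hR, regs_zero]
    · obtain ⟨_, h'⟩ := mem_regs h0; cases h'
  · exfalso
    have h0 : (Lit.lab 0 : Lit n) ∈ Lit.kap m' ::ₘ R' := by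
      rw [← hEq]; exact Multiset.mem_cons_self _ _
    rcases Multiset.mem_cons.mp h0 with h0 | h0
    · cases h0
    · obtain ⟨_, h'⟩ := hR' _ h0; cases h'

lemma accM_kap {M : List (Instr n)} {m : Fin n} {u : Multiset (Lit n)}
    (h : AccM M (Lit.kap m ::ₘ u)) : Lit.reg m ∉ u := by
  rcases accM_char h with ⟨i, c, hEq, -⟩ | ⟨m', R', hEq, hR', hnm⟩
  · exfalso
    have hk : (Lit.kap m : Lit n) ∈ Lit.lab i ::ₘ regs c := by
      rw [← hEq]; exact Multiset.mem_cons_self _ _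
    rcases Multiset.mem_cons.mp hk with hk | hk
    · cases hk
    · obtain ⟨_, h'⟩ := mem_regs hk; cases h'
  · have hk : (Lit.kap m : Lit n) ∈ Lit.kap m' ::ₘ R' := by
      rw [← hEq]; exact Multiset.mem_cons_self _ _
    rcases Multiset.mem_cons.mp hk with hk | hk
    · injection hk with hk
      subst hk
      have hu : u = R' := (Multiset.cons_inj_right _).mp hEq
      rw [hu]; exact hnm
    · exfalso; obtain ⟨_, h'⟩ := hR' _ hk; cases h'

end Machine
section Axioms

variable {n : ℕ} {M : List (Instr n)}

/-- The valuation sending each literal to its singleton multiset. -/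
def Vs : Lit n → Set (Multiset (Lit n)) := fun a => {({a} : Multiset (Lit n))}

lemma singleton_mem_sem_atom (a : Lit n) :
    ({a} : Multiset (Lit n)) ∈ sem (AccM M) Vs (Fm.atom a) :=
  subset_cl rfl

lemma atom_le_atom {a b : Lit n}
    (h : ∀ u, AccM M (b ::ₘ u) → AccM M (a ::ₘ u)) :
    sem (AccM M) Vs (Fm.atom a) ⊆ sem (AccM M) Vs (Fm.atom b) := by
  apply cl_min
  intro x hx
  simp only [Vs, Set.mem_singleton_iff] at hx; subst hx
  intro u hu
  have hb := hu {b} rfl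
  rw [Multiset.singleton_add] at hb ⊢
  exact h u hb

lemma atom_le_tens {a b c : Lit n}
    (h : ∀ u, AccM M (b ::ₘ c ::ₘ u) → AccM M (a ::ₘ u)) :
    sem (AccM M) Vs (Fm.atom a) ⊆
      sem (AccM M) Vs (Fm.tens (Fm.atom b) (Fm.atom c)) := by
  apply cl_min
  intro x hx
  simp only [Vs, Set.mem_singleton_iff] at hx; subst hx
  intro u hu
  have hb := hu ({b} + {c})
    ⟨{b}, singleton_mem_sem_atom b, {c}, singleton_mem_sem_atom c, rfl⟩
  rw [add_assoc, Multiset.singleton_add, Multiset.singleton_add] at hb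
  rw [Multiset.singleton_add]
  exact h u hb

lemma tens_le_atom {a b c : Lit n}
    (h : ∀ u, AccM M (c ::ₘ u) → AccM M (a ::ₘ b ::ₘ u)) :
    sem (AccM M) Vs (Fm.tens (Fm.atom a) (Fm.atom b)) ⊆
      sem (AccM M) Vs (Fm.atom c) := by
  apply cl_min
  rintro z ⟨x, hx, y, hy, rfl⟩
  refine cl_min ?_ (cl_add_cl (pole := AccM M) hx hy)
  rintro w ⟨p, hp, q, hq, rfl⟩
  simp only [Vs, Set.mem_singleton_iff] at hp hq; subst hp; subst hq
  intro u hu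
  have hc := hu {c} rfl
  rw [Multiset.singleton_add] at hc
  rw [add_assoc, Multiset.singleton_add, Multiset.singleton_add]
  exact h u hc

lemma tens_le_tens {a b c d : Lit n}
    (h : ∀ u, AccM M (c ::ₘ d ::ₘ u) → AccM M (a ::ₘ b ::ₘ u)) :
    sem (AccM M) Vs (Fm.tens (Fm.atom a) (Fm.atom b)) ⊆
      sem (AccM M) Vs (Fm.tens (Fm.atom c) (Fm.atom d)) := by
  apply cl_min
  rintro z ⟨x, hx, y, hy, rfl⟩
  refine cl_min ?_ (cl_add_cl (pole := AccM M) hx hy)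
  rintro w ⟨p, hp, q, hq, rfl⟩
  simp only [Vs, Set.mem_singleton_iff] at hp hq; subst hp; subst hq
  intro u hu
  have hc := hu ({c} + {d})
    ⟨{c}, singleton_mem_sem_atom c, {d}, singleton_mem_sem_atom d, rfl⟩
  rw [add_assoc, Multiset.singleton_add, Multiset.singleton_add] at hc
  rw [add_assoc, Multiset.singleton_add, Multiset.singleton_add]
  exact h u hc

lemma atom_le_oplus {a b c : Lit n}
    (h : ∀ u, AccM M (b ::ₘ u) → AccM M (c ::ₘ u) → AccM M (a ::ₘ u)) :
    sem (AccM M) Vs (Fm.atom a) ⊆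
      sem (AccM M) Vs (Fm.oplus (Fm.atom b) (Fm.atom c)) := by
  apply cl_min
  intro x hx
  simp only [Vs, Set.mem_singleton_iff] at hx; subst hx
  intro u hu
  have hb := hu {b} (Or.inl (singleton_mem_sem_atom b))
  have hc := hu {c} (Or.inr (singleton_mem_sem_atom c))
  rw [Multiset.singleton_add] at hb hc
  rw [Multiset.singleton_add]
  exact h u hb hc

lemma phi_mem (hSrc : ∀ I ∈ M, 1 ≤ I.src) {φ : Fm (Lit n)}
    (hφ : φ ∈ PhiF M + KF n) : (0 : Multiset (Lit n)) ∈ sem (AccM M) Vs φ := by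
  rcases Multiset.mem_add.mp hφ with hφ | hφ
  · rw [PhiF, Multiset.mem_coe] at hφ
    obtain ⟨I, hI, rfl⟩ := List.mem_map.mp hφ
    cases I with
    | inc i m j =>
        exact zero_mem_lolli (atom_le_tens (fun u hu => AccM.inc hI hu))
    | dec i m j =>
        exact zero_mem_lolli (tens_le_atom (fun u hu => AccM.dec hI hu))
    | pos i m j =>
        exact zero_mem_lolli (tens_le_tens (fun u hu => AccM.pos hI hu))
    | zero i m j =>
        exact zero_mem_lolli (atom_le_oplus
          (fun u hb hc => AccM.zero hI (accM_kap hc) hb))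
  · rw [KF, Multiset.mem_sum] at hφ
    obtain ⟨m, -, hm⟩ := hφ
    rcases Multiset.mem_cons.mp hm with rfl | hm
    · refine zero_mem_lolli (atom_le_atom (fun u hu => ?_))
      rw [accM_lab0 hSrc hu]
      exact AccM.kapHalt m
    · obtain ⟨i, hi, rfl⟩ := Multiset.mem_map.mp hm
      have hne : i ≠ m := (Finset.mem_erase.mp (Finset.mem_val.mp hi)).1
      exact zero_mem_lolli (tens_le_atom (fun u hu => AccM.kapStep hne hu))

lemma coe_flatMap {β γ : Type} (l : List β) (f : β → List γ) :
    ((l.flatMap f : List γ) : Multiset γ) =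
      (l.map fun b => ((f b : List γ) : Multiset γ)).sum := by
  induction l with
  | nil => rfl
  | cons a l ih =>
      rw [List.flatMap_cons, List.map_cons, List.sum_cons, ← ih]
      rfl

lemma list_mem_semCtx (L : List (Lit n)) :
    ((L : Multiset (Lit n))) ∈
      semCtx (AccM M) Vs ((L.map Fm.atom : List (Fm (Lit n))) : Multiset (Fm (Lit n))) := by
  induction L with
  | nil => rw [show ((([] : List (Lit n)).map Fm.atom : List (Fm (Lit n))) : Multiset (Fm (Lit n))) = 0 from rfl, semCtx_zero]; rfl
  | cons a L ih =>
      rw [show (((a :: L).map Fm.atom : List (Fm (Lit n))) : Multiset (Fm (Lit n)))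
          = Fm.atom a ::ₘ (L.map Fm.atom : List (Fm (Lit n))) from rfl, semCtx_cons]
      exact ⟨{a}, singleton_mem_sem_atom a, L, ih, (Multiset.singleton_add a L).symm⟩

lemma encC_mem_sem_encCF (k : Fin n → ℕ) :
    encC ((1 : ℕ), k) ∈ sem (AccM M) Vs (encCF ((1 : ℕ), k)) := by
  have hL : ((List.finRange n).flatMap fun m : Fin n =>
        List.replicate (k m) (Fm.atom (Lit.reg m) : Fm (Lit n)))
      = ((List.finRange n).flatMap fun m : Fin n =>
        List.replicate (k m) (Lit.reg m)).map Fm.atom := by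
    rw [List.map_flatMap]
    simp [List.map_replicate]
  have hR : ((((List.finRange n).flatMap fun m : Fin n =>
      List.replicate (k m) (Lit.reg m)) : List (Lit n)) : Multiset (Lit n)) = regs k := by
    rw [coe_flatMap, regs, Fin.sum_univ_def]
    simp [Multiset.coe_replicate]
  rw [encC_eq, encCF, hL, ← Multiset.singleton_add]
  refine foldl_sem _ _ _ _ (singleton_mem_sem_atom (Lit.lab 1)) ?_
  rw [← hR]
  exact list_mem_semCtx _

end Axioms
end Stmt13
/-- if the sequent
`l₁ ⊗ r₁^{k₁} ⊗ ⋯ ⊗ rₙ^{kₙ}, !Φ_M, !𝒦 ⊢ l₀` is derivable in linear logic,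
then the Minsky machine `M` can go from `(L₁, k₁, …, kₙ)` to the halting
configuration `(L₀, 0, …, 0)`. -/
theorem derivable_to_computation {n : ℕ} (M : List (Instr n)) (k : Fin n → ℕ)
    (hSrc : ∀ I ∈ M, 1 ≤ I.src)
    (h : Deriv (encCF (1, k) ::ₘ (PhiF M + KF n).map Fm.bang)
          (some (Fm.atom (Lit.lab 0)))) :
    Reaches M (1, k) (0, fun _ => 0) := by
  have hctx : encC ((1 : ℕ), k) ∈ Stmt13.semCtx (Stmt13.AccM M) Stmt13.Vs
      (encCF (1, k) ::ₘ (PhiF M + KF n).map Fm.bang) := by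
    rw [Stmt13.semCtx_cons]
    refine ⟨encC ((1 : ℕ), k), Stmt13.encC_mem_sem_encCF k, 0, ?_, (add_zero _).symm⟩
    apply Stmt13.zero_mem_semCtx
    intro B hB
    obtain ⟨φ, hφ, rfl⟩ := Multiset.mem_map.mp hB
    exact Stmt13.subset_cl ⟨rfl, Stmt13.phi_mem hSrc hφ⟩
  have hsem := Stmt13.soundness h _ hctx
  have hacc : Stmt13.AccM M (encC ((1 : ℕ), k)) := by
    have := hsem 0 (fun x hx => by
      simp only [Stmt13.Vs, Set.mem_singleton_iff] at hx; subst hx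
      rw [add_zero, show ({Lit.lab 0} : Multiset (Lit n)) = {Lit.lab 0} from rfl]
      exact Stmt13.AccM.halt)
    rwa [add_zero] at this
  rcases Stmt13.accM_char hacc with ⟨i, c, hEq, hR⟩ | ⟨m', R', hEq, hR', -⟩
  · rw [Stmt13.encC_eq] at hEq
    have h1 : (Lit.lab i : Lit n) ∈ Lit.lab 1 ::ₘ Stmt13.regs k := by
      rw [hEq]; exact Multiset.mem_cons_self _ _
    rcases Multiset.mem_cons.mp h1 with h1 | h1
    · injection h1 with h1
      subst h1
      have h2 : Stmt13.regs k = Stmt13.regs c := (Multiset.cons_inj_right _).mp hEq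
      have h3 : c = k := funext fun m => by
        rw [← Stmt13.count_regs c m, ← h2, Stmt13.count_regs]
      rwa [h3] at hR
    · obtain ⟨_, h'⟩ := Stmt13.mem_regs h1; cases h'
  · exfalso
    have h1 : (Lit.kap m' : Lit n) ∈ Lit.lab 1 ::ₘ Stmt13.regs k := by
      rw [Stmt13.encC_eq] at hEq
      rw [hEq]; exact Multiset.mem_cons_self _ _
    rcases Multiset.mem_cons.mp h1 with h1 | h1
    · cases h1
    · obtain ⟨_, h'⟩ := Stmt13.mem_regs h1; cases h'
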